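/- arXiv:1908.02965 — 4 statements merged into one kernel-verified Lean document; each statement's English description precedes it below -/
import Mathlib

section
/- Let G be a group with the property that for any finitely generated subgroups H₁,…,Hₙ ≤ G, any unsolvable left system of equations on H₁,…,Hₙ remains unsolvable on N₁H₁,…,NₙHₙ for some finite-index normal subgroups N₁,…,Nₙ ⊴ G (the HL-property). Then G has the RZ-property: every product H₁⋯Hₙ of finitely generated subgroups is closed in the profinite topology. -/
open scoped Pointwise

/-- An equation of a left system on subgroups indexed by `Fin n`, with variables
indexed by `Fin m`: either `xᵢ Hⱼ = c Hⱼ` (when `r = none`) or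
`xᵢ Hⱼ = x_r c Hⱼ` (when `r = some r`). -/
structure LeftEqn (G : Type*) (m n : ℕ) where
  i : Fin m
  j : Fin n
  c : G
  r : Option (Fin m)

/-- The equation `e` holds for the assignment `x` of variables, relative to the family
of subgroups `K`. -/
def EqnHolds {G : Type*} [Group G] {m n : ℕ} (K : Fin n → Subgroup G)
    (x : Fin m → G) (e : LeftEqn G m n) : Prop :=
  match e.r with
  | none => x e.i • ((K e.j : Set G)) = e.c • ((K e.j : Set G))
  | some r => x e.i • ((K e.j : Set G)) = (x r * e.c) • ((K e.j : Set G))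

/-- A left system of equations has a solution relative to the subgroups `K`. -/
def Solvable {G : Type*} [Group G] {m n : ℕ} (K : Fin n → Subgroup G)
    (S : List (LeftEqn G m n)) : Prop :=
  ∃ x : Fin m → G, ∀ e ∈ S, EqnHolds K x e

/-- The HL-property: every left system on finitely generated subgroups `H₁,…,Hₙ` that has
no solution remains unsolvable after enlarging each `Hⱼ` to `NⱼHⱼ` for suitable
finite-index normal subgroups `Nⱼ`. -/
def HLProperty (G : Type*) [Group G] : Prop :=
  ∀ (m n : ℕ) (H : Fin n → Subgroup G), (∀ j, (H j).FG) →
    ∀ S : List (LeftEqn G m n), ¬ Solvable H S →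
      ∃ N K : Fin n → Subgroup G,
        (∀ j, (N j).Normal ∧ (N j).FiniteIndex ∧
          ((K j : Set G) = (N j : Set G) * (H j : Set G))) ∧
        ¬ Solvable K S

/-- The profinite topology on a group: generated by left cosets of
finite-index normal subgroups. -/
def profiniteTopology (G : Type*) [Group G] : TopologicalSpace G :=
  TopologicalSpace.generateFrom
    {s : Set G | ∃ (N : Subgroup G) (g : G), N.Normal ∧ N.FiniteIndex ∧ s = g • (N : Set G)}

/-- Telescoping description of membership in a product of a finite family of sets. -/
lemma mem_ofFn_prod_iff {G : Type*} [Group G] {n : ℕ} (f : Fin n → Set G) (g : G) :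
    g ∈ (List.ofFn f).prod ↔
      ∃ x : Fin (n + 1) → G, x 0 = 1 ∧ x (Fin.last n) = g ∧
        ∀ i : Fin n, (x i.castSucc)⁻¹ * x i.succ ∈ f i := by
  induction n generalizing g with
  | zero =>
    simp only [List.ofFn_zero, List.prod_nil, Set.mem_one]
    constructor
    · rintro rfl
      exact ⟨fun _ => 1, rfl, rfl, fun i => i.elim0⟩
    · rintro ⟨x, h0, hl, -⟩
      rw [← hl, Fin.last_zero, h0]
  | succ n ih =>
    rw [List.ofFn_succ, List.prod_cons]
    constructor
    · intro hmem
      rw [Set.mem_mul] at hmem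
      obtain ⟨a, ha, b, hb, hab⟩ := hmem
      obtain ⟨x, h0, hl, htel⟩ := (ih _ b).1 hb
      refine ⟨Fin.cons 1 (fun i => a * x i), Fin.cons_zero _ _, ?_, ?_⟩
      · rw [← Fin.succ_last, Fin.cons_succ, hl, hab]
      · intro i
        induction i using Fin.cases with
        | zero =>
          have : ((0 : Fin (n + 1)).castSucc) = 0 := rfl
          rw [this, Fin.cons_zero, Fin.succ_zero_eq_one]
          have h1 : (1 : Fin (n + 2)) = Fin.succ 0 := rfl
          rw [h1, Fin.cons_succ, h0, mul_one, inv_one, one_mul]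
          exact ha
        | succ j =>
          rw [← Fin.succ_castSucc, Fin.cons_succ, Fin.cons_succ, mul_inv_rev]
          have : (x j.castSucc)⁻¹ * a⁻¹ * (a * x j.succ)
              = (x j.castSucc)⁻¹ * x j.succ := by group
          rw [this]
          exact htel j
    · rintro ⟨y, h0, hl, htel⟩
      have ha : y 1 ∈ f 0 := by
        have := htel 0
        have hc : ((0 : Fin (n + 1)).castSucc) = 0 := rfl
        rwa [hc, h0, inv_one, one_mul, Fin.succ_zero_eq_one] at this
      rw [Set.mem_mul]
      refine ⟨y 1, ha, (y 1)⁻¹ * g, ?_, by group⟩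
      refine (ih _ _).2 ⟨fun i => (y 1)⁻¹ * y i.succ, ?_, ?_, ?_⟩
      · show (y 1)⁻¹ * y (Fin.succ 0) = 1
        rw [Fin.succ_zero_eq_one, inv_mul_cancel]
      · show (y 1)⁻¹ * y (Fin.last n).succ = (y 1)⁻¹ * g
        rw [Fin.succ_last, hl]
      · intro i
        show ((y 1)⁻¹ * y i.castSucc.succ)⁻¹ * ((y 1)⁻¹ * y i.succ.succ) ∈ f i.succ
        rw [mul_inv_rev, Fin.succ_castSucc]
        have : (y i.succ.castSucc)⁻¹ * ((y 1)⁻¹)⁻¹ * ((y 1)⁻¹ * y i.succ.succ)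
            = (y i.succ.castSucc)⁻¹ * y i.succ.succ := by group
        rw [this]
        exact htel i.succ

lemma key_lemma {G : Type*} [Group G] (hHL : HLProperty G) (n : ℕ)
    (H : Fin n → Subgroup G) (hFG : ∀ i, (H i).FG) (g : G)
    (hg : g ∉ (List.ofFn fun i => ((H i : Set G))).prod) :
    ∃ N : Subgroup G, N.Normal ∧ N.FiniteIndex ∧
      ∀ ν ∈ N, g * ν ∉ (List.ofFn fun i => ((H i : Set G))).prod := by
  set H' : Fin (n + 1) → Subgroup G := Fin.cons ⊥ H with hH'
  have hH'0 : H' 0 = ⊥ := Fin.cons_zero _ _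
  have hH's : ∀ i : Fin n, H' i.succ = H i := fun i => Fin.cons_succ _ _ _
  have hFG' : ∀ j, (H' j).FG := by
    intro j
    induction j using Fin.cases with
    | zero => rw [hH'0]; exact ⟨∅, by simp⟩
    | succ i => rw [hH's]; exact hFG i
  set S : List (LeftEqn G (n + 1) (n + 1)) :=
    ⟨0, 0, 1, none⟩ :: ⟨Fin.last n, 0, g, none⟩ ::
      List.ofFn (fun i : Fin n => ⟨i.succ, i.succ, 1, some i.castSucc⟩) with hS
  have hmemS : ∀ i : Fin n,
      (⟨i.succ, i.succ, 1, some i.castSucc⟩ : LeftEqn G (n + 1) (n + 1)) ∈ S := by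
    intro i
    rw [hS]
    exact List.mem_cons_of_mem _ (List.mem_cons_of_mem _
      (List.mem_ofFn.2 ⟨i, rfl⟩))
  have hunsolv : ¬ Solvable H' S := by
    rintro ⟨x, hx⟩
    have h0 : x 0 = 1 := by
      have := hx _ List.mem_cons_self
      rw [EqnHolds] at this
      simp only at this
      rw [leftCoset_eq_iff, hH'0] at this
      have := Subgroup.mem_bot.1 this
      rw [mul_one] at this
      exact inv_eq_one.1 (by rw [this])
    have hlast : x (Fin.last n) = g := by
      have := hx _ (List.mem_cons_of_mem _ List.mem_cons_self)
      rw [EqnHolds] at this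
      simp only at this
      rw [leftCoset_eq_iff, hH'0] at this
      have := Subgroup.mem_bot.1 this
      have : x (Fin.last n) * ((x (Fin.last n))⁻¹ * g) = x (Fin.last n) * 1 := by
        rw [this]
      rw [mul_inv_cancel_left, mul_one] at this
      exact this.symm
    have htel : ∀ i : Fin n, (x i.castSucc)⁻¹ * x i.succ ∈ (H i : Set G) := by
      intro i
      have := hx _ (hmemS i)
      rw [EqnHolds] at this
      simp only at this
      rw [leftCoset_eq_iff, hH's, mul_one] at this
      have := (H i).inv_mem this
      rwa [mul_inv_rev, inv_inv, SetLike.mem_coe] at *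
    exact hg ((mem_ofFn_prod_iff _ g).2 ⟨x, h0, hlast, htel⟩)
  obtain ⟨N', K, hNK, hK⟩ := hHL (n + 1) (n + 1) H' hFG' S hunsolv
  refine ⟨⨅ j, N' j, ?_, ?_, ?_⟩
  · constructor
    intro a ha b
    rw [Subgroup.mem_iInf] at ha ⊢
    exact fun j => (hNK j).1.conj_mem _ (ha j) b
  · exact Subgroup.finiteIndex_iInf fun j => (hNK j).2.1
  · intro ν hν hmem
    rw [Subgroup.mem_iInf] at hν
    obtain ⟨x, h0, hlast, htel⟩ := (mem_ofFn_prod_iff _ _).1 hmem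
    apply hK
    refine ⟨x, ?_⟩
    intro e he
    rw [hS] at he
    rcases List.mem_cons.1 he with rfl | he
    · rw [EqnHolds]
      simp only
      rw [h0]
    · rcases List.mem_cons.1 he with rfl | he
      · rw [EqnHolds]
        simp only
        rw [leftCoset_eq_iff]
        have hνK : ν ∈ (K 0 : Set G) := by
          rw [(hNK 0).2.2]
          have : ν * 1 ∈ (N' 0 : Set G) * (H' 0 : Set G) :=
            Set.mul_mem_mul (hν 0) (by rw [hH'0]; exact (⊥ : Subgroup G).one_mem)
          rwa [mul_one] at this
        have : (x (Fin.last n))⁻¹ * g = ν⁻¹ := by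
          rw [hlast]; group
        rw [this]
        exact (K 0).inv_mem (SetLike.mem_coe.1 hνK)
      · obtain ⟨i, hi⟩ := List.mem_ofFn.1 he
        subst hi
        rw [EqnHolds]
        simp only
        rw [mul_one, leftCoset_eq_iff]
        have hmemK : (x i.castSucc)⁻¹ * x i.succ ∈ K i.succ := by
          have : (1 : G) * ((x i.castSucc)⁻¹ * x i.succ)
              ∈ (N' i.succ : Set G) * (H' i.succ : Set G) :=
            Set.mul_mem_mul ((N' i.succ).one_mem) (by rw [hH's]; exact htel i)
          rw [one_mul] at this
          rw [← SetLike.mem_coe, (hNK i.succ).2.2]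
          exact this
        have := (K i.succ).inv_mem hmemK
        rwa [mul_inv_rev, inv_inv] at this

/-- The HL-property implies the RZ-property: every finite product of finitely generated
subgroups is closed in the profinite topology. -/
theorem stmt9 {G : Type*} [Group G] (hHL : HLProperty G) :
    ∀ (n : ℕ) (H : Fin n → Subgroup G), (∀ i, (H i).FG) →
      @IsClosed G (profiniteTopology G) (List.ofFn fun i => ((H i : Set G))).prod := by
  intro n H hFG
  letI : TopologicalSpace G := profiniteTopology G
  rw [← isOpen_compl_iff, isOpen_iff_forall_mem_open]
  intro g hg
  obtain ⟨N, hNn, hNf, hdisj⟩ := key_lemma hHL n H hFG g hg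
  refine ⟨g • (N : Set G), ?_, ?_, ?_⟩
  · intro y hy
    obtain ⟨ν, hν, rfl⟩ := hy
    exact hdisj ν hν
  · exact TopologicalSpace.isOpen_generateFrom_of_mem ⟨N, g, hNn, hNf, rfl⟩
  · exact ⟨1, N.one_mem, mul_one g⟩
end

section
/- Let G be a group with the HL-property. Then G is residually finite. -/
open scoped Pointwise

theorem eqnHolds_mk_none {G : Type*} [Group G] {m n : ℕ} (K : Fin n → Subgroup G)
    (x : Fin m → G) (i : Fin m) (j : Fin n) (c : G) :
    EqnHolds K x ⟨i, j, c, none⟩ ↔ (x i)⁻¹ * c ∈ K j :=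
  leftCoset_eq_iff _

def membershipSystem {G : Type*} [Group G] (g : G) : List (LeftEqn G 1 1) :=
  [⟨0, 0, g, none⟩, ⟨0, 0, 1, none⟩]

theorem solvable_membershipSystem_iff {G : Type*} [Group G] (K : Fin 1 → Subgroup G) (g : G) :
    Solvable K (membershipSystem g) ↔ g ∈ K 0 := by
  simp only [Solvable, membershipSystem, List.forall_mem_cons, List.not_mem_nil,
    IsEmpty.forall_iff, implies_true, and_true, eqnHolds_mk_none, mul_one]
  constructor
  · rintro ⟨x, hg, hx⟩
    simpa using (K 0).mul_mem (inv_mem hx) hg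
  · exact fun hg => ⟨fun _ => g, by simp [hg]⟩

theorem Subgroup.eq_of_coe_eq_mul_bot {G : Type*} [Group G] {K N : Subgroup G}
    (h : (K : Set G) = (N : Set G) * ((⊥ : Subgroup G) : Set G)) : K = N := by
  rw [Subgroup.coe_bot, Set.singleton_one, mul_one] at h
  exact SetLike.coe_injective h

/-- A group with the HL-property is residually finite. -/
theorem stmt10 {G : Type*} [Group G] (hHL : HLProperty G) :
    ∀ g : G, g ≠ 1 → ∃ N : Subgroup G, N.Normal ∧ N.FiniteIndex ∧ g ∉ N := by
  intro g hg
  have hbot : ¬ Solvable (fun _ => ⊥) (membershipSystem g) := by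
    rwa [solvable_membershipSystem_iff, Subgroup.mem_bot]
  obtain ⟨N, K, hNK, hK⟩ := hHL 1 1 (fun _ => ⊥) (fun _ => ⟨∅, by simp⟩) _ hbot
  obtain ⟨hnormal, hfinite, hKN⟩ := hNK 0
  rw [solvable_membershipSystem_iff, Subgroup.eq_of_coe_eq_mul_bot hKN] at hK
  exact ⟨N 0, hnormal, hfinite, hK⟩
end

section
/- Let L be a relational language, T a Gaifman clique L-structure (for every a, b ∈ T there is a relation symbol R of arity m ≥ 2 and a tuple (c₁,…,c_m) with a, b among the cᵢ and R^T(c₁,…,c_m)). Let D be the free amalgamation of L-structures C₁ and C₂ over a common substructure C. If h : T → D is a homomorphism, then h(T) ⊆ C₁ or h(T) ⊆ C₂. -/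
theorem forall_or_forall_of_forall_pair {α : Type*} {p q : α → Prop}
    (hpq : ∀ x y, p x ∧ p y ∨ q x ∧ q y) : (∀ x, p x) ∨ ∀ x, q x := by
  refine or_iff_not_imp_left.2 fun hp y => ?_
  obtain ⟨x, hx⟩ := not_forall.1 hp
  exact ((hpq x y).resolve_left fun h => hx h.1).2

theorem stmt13_general {L : FirstOrder.Language} {D T : Type*} [L.Structure T]
    (A B : Set D)
    (r₁ r₂ : ∀ n, L.Relations n → Set (Fin n → D))
    (h₁ : ∀ (n : ℕ) (R : L.Relations n) (t : Fin n → D), t ∈ r₁ n R → ∀ i, t i ∈ A)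
    (h₂ : ∀ (n : ℕ) (R : L.Relations n) (t : Fin n → D), t ∈ r₂ n R → ∀ i, t i ∈ B)
    (hclique : ∀ a b : T, ∃ m : ℕ, 2 ≤ m ∧ ∃ (R : L.Relations m) (c : Fin m → T),
      (∃ i, c i = a) ∧ (∃ i, c i = b) ∧ FirstOrder.Language.Structure.RelMap R c)
    (h : T → D)
    (hhom : ∀ (n : ℕ) (R : L.Relations n) (c : Fin n → T),
      FirstOrder.Language.Structure.RelMap R c → (fun i => h (c i)) ∈ r₁ n R ∪ r₂ n R) :
    (∀ x, h x ∈ A) ∨ (∀ x, h x ∈ B) := by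
  refine forall_or_forall_of_forall_pair fun x y => ?_
  obtain ⟨m, -, R, c, ⟨i, rfl⟩, ⟨j, rfl⟩, hR⟩ := hclique x y
  rcases hhom m R c hR with hr | hr
  · exact Or.inl ⟨h₁ m R _ hr i, h₁ m R _ hr j⟩
  · exact Or.inr ⟨h₂ m R _ hr i, h₂ m R _ hr j⟩

/-- A homomorphism from a Gaifman clique `T` into the free amalgamation `D` of `C₁`
(domain `A`, relations `r₁`) and `C₂` (domain `B`, relations `r₂`), whose relations
are `r₁ ∪ r₂`, lands entirely in `C₁` or entirely in `C₂`. -/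
theorem stmt13 {L : FirstOrder.Language} [L.IsRelational] {D T : Type*} [L.Structure T]
    (A B : Set D)
    (r₁ r₂ : ∀ n, L.Relations n → Set (Fin n → D))
    (h₁ : ∀ (n : ℕ) (R : L.Relations n) (t : Fin n → D), t ∈ r₁ n R → ∀ i, t i ∈ A)
    (h₂ : ∀ (n : ℕ) (R : L.Relations n) (t : Fin n → D), t ∈ r₂ n R → ∀ i, t i ∈ B)
    (hclique : ∀ a b : T, ∃ m : ℕ, 2 ≤ m ∧ ∃ (R : L.Relations m) (c : Fin m → T),
      (∃ i, c i = a) ∧ (∃ i, c i = b) ∧ FirstOrder.Language.Structure.RelMap R c)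
    (h : T → D)
    (hhom : ∀ (n : ℕ) (R : L.Relations n) (c : Fin n → T),
      FirstOrder.Language.Structure.RelMap R c → (fun i => h (c i)) ∈ r₁ n R ∪ r₂ n R) :
    (∀ x, h x ∈ A) ∨ (∀ x, h x ∈ B) :=
  stmt13_general A B r₁ r₂ h₁ h₂ hclique h hhom
end

section
/- Let L be a relational language and T a set of L-structures each of which is a Gaifman clique. If C₁ and C₂ are T-free L-structures containing a common substructure C, then their free amalgamation over C is T-free. -/
/-!
Every relation of the free amalgam lies inside `C₁` or inside `C₂`, so two points of `C₁ \ C`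
and `C₂ \ C` are never related. Hence the image of a Gaifman clique under a homomorphism into
the amalgam lies entirely in `C₁` or entirely in `C₂`, and since `C₁` and `C₂` agree on `C`
the homomorphism is already one into that factor.
-/

namespace FirstOrder.Language

def IsGaifmanClique (L : Language) (M : Type*) [L.Structure M] : Prop :=
  ∀ a b : M, ∃ (n : ℕ) (R : L.Relations n) (c : Fin n → M),
    a ∈ Set.range c ∧ b ∈ Set.range c ∧ Structure.RelMap R c

section FreeAmalgamation

variable {L : Language} {M D : Type*} [L.Structure M] {A B : Set D}
  {r₁ r₂ : ∀ n, L.Relations n → Set (Fin n → D)}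

theorem IsGaifmanClique.forall_mem_or_forall_mem (hM : L.IsGaifmanClique M)
    (h₁ : ∀ (n : ℕ) (R : L.Relations n) (t : Fin n → D), t ∈ r₁ n R → ∀ i, t i ∈ A)
    (h₂ : ∀ (n : ℕ) (R : L.Relations n) (t : Fin n → D), t ∈ r₂ n R → ∀ i, t i ∈ B)
    {f : M → D} (hf : ∀ (n : ℕ) (R : L.Relations n) (c : Fin n → M),
      Structure.RelMap R c → (fun k => f (c k)) ∈ r₁ n R ∪ r₂ n R) :
    (∀ x, f x ∈ A) ∨ (∀ x, f x ∈ B) := by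
  by_contra! ⟨⟨a, ha⟩, ⟨b, hb⟩⟩
  obtain ⟨n, R, c, ⟨k, rfl⟩, ⟨l, rfl⟩, hR⟩ := hM a b
  rcases hf n R c hR with hr | hr
  · exact ha (h₁ n R _ hr k)
  · exact hb (h₂ n R _ hr l)

theorem relMap_mem_left_of_forall_mem
    (hc : ∀ (n : ℕ) (R : L.Relations n) (t : Fin n → D), t ∈ r₂ n R → (∀ i, t i ∈ A) → t ∈ r₁ n R)
    {f : M → D} (hA : ∀ x, f x ∈ A) (hf : ∀ (n : ℕ) (R : L.Relations n) (c : Fin n → M),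
      Structure.RelMap R c → (fun k => f (c k)) ∈ r₁ n R ∪ r₂ n R)
    (n : ℕ) (R : L.Relations n) (c : Fin n → M) (hR : Structure.RelMap R c) :
    (fun k => f (c k)) ∈ r₁ n R :=
  (hf n R c hR).elim id fun hr => hc n R _ hr fun k => hA (c k)

end FreeAmalgamation

end FirstOrder.Language

open FirstOrder FirstOrder.Language

theorem stmt14_general {L : FirstOrder.Language} {D : Type*}
    (A B : Set D)
    (r₁ r₂ : ∀ n, L.Relations n → Set (Fin n → D))
    (h₁ : ∀ (n : ℕ) (R : L.Relations n) (t : Fin n → D), t ∈ r₁ n R → ∀ i, t i ∈ A)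
    (h₂ : ∀ (n : ℕ) (R : L.Relations n) (t : Fin n → D), t ∈ r₂ n R → ∀ i, t i ∈ B)
    (hc₁ : ∀ (n : ℕ) (R : L.Relations n) (t : Fin n → D),
      t ∈ r₂ n R → (∀ i, t i ∈ A) → t ∈ r₁ n R)
    (hc₂ : ∀ (n : ℕ) (R : L.Relations n) (t : Fin n → D),
      t ∈ r₁ n R → (∀ i, t i ∈ B) → t ∈ r₂ n R)
    {ι : Type*} (T : ι → Type*) [∀ i, L.Structure (T i)]
    (hclique : ∀ i, ∀ a b : T i, ∃ m : ℕ, 2 ≤ m ∧ ∃ (R : L.Relations m) (c : Fin m → T i),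
      (∃ k, c k = a) ∧ (∃ k, c k = b) ∧ FirstOrder.Language.Structure.RelMap R c)
    (hfree₁ : ∀ i, ¬ ∃ h : T i → D, (∀ x, h x ∈ A) ∧
      ∀ (n : ℕ) (R : L.Relations n) (c : Fin n → T i),
        FirstOrder.Language.Structure.RelMap R c → (fun k => h (c k)) ∈ r₁ n R)
    (hfree₂ : ∀ i, ¬ ∃ h : T i → D, (∀ x, h x ∈ B) ∧
      ∀ (n : ℕ) (R : L.Relations n) (c : Fin n → T i),
        FirstOrder.Language.Structure.RelMap R c → (fun k => h (c k)) ∈ r₂ n R) :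
    ∀ i, ¬ ∃ h : T i → D, ∀ (n : ℕ) (R : L.Relations n) (c : Fin n → T i),
      FirstOrder.Language.Structure.RelMap R c → (fun k => h (c k)) ∈ r₁ n R ∪ r₂ n R := by
  rintro i ⟨h, hh⟩
  have hTi : L.IsGaifmanClique (T i) := fun a b =>
    let ⟨m, _, rest⟩ := hclique i a b
    ⟨m, rest⟩
  rcases hTi.forall_mem_or_forall_mem h₁ h₂ hh with hA | hB
  · exact hfree₁ i ⟨h, hA, relMap_mem_left_of_forall_mem hc₁ hA hh⟩
  · refine hfree₂ i ⟨h, hB, relMap_mem_left_of_forall_mem hc₂ hB ?_⟩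
    simpa only [Set.union_comm] using hh

/-- If every structure in the family `T` is a Gaifman clique and `C₁` (domain `A`,
relations `r₁`) and `C₂` (domain `B`, relations `r₂`) are `T`-free, with common induced
substructure expressed by the compatibility hypotheses, then their free amalgamation
(relations `r₁ ∪ r₂`) is `T`-free. -/
theorem stmt14 {L : FirstOrder.Language} [L.IsRelational] {D : Type*}
    (A B : Set D)
    (r₁ r₂ : ∀ n, L.Relations n → Set (Fin n → D))
    (h₁ : ∀ (n : ℕ) (R : L.Relations n) (t : Fin n → D), t ∈ r₁ n R → ∀ i, t i ∈ A)
    (h₂ : ∀ (n : ℕ) (R : L.Relations n) (t : Fin n → D), t ∈ r₂ n R → ∀ i, t i ∈ B)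
    (hc₁ : ∀ (n : ℕ) (R : L.Relations n) (t : Fin n → D),
      t ∈ r₂ n R → (∀ i, t i ∈ A) → t ∈ r₁ n R)
    (hc₂ : ∀ (n : ℕ) (R : L.Relations n) (t : Fin n → D),
      t ∈ r₁ n R → (∀ i, t i ∈ B) → t ∈ r₂ n R)
    {ι : Type*} (T : ι → Type*) [∀ i, L.Structure (T i)]
    (hclique : ∀ i, ∀ a b : T i, ∃ m : ℕ, 2 ≤ m ∧ ∃ (R : L.Relations m) (c : Fin m → T i),
      (∃ k, c k = a) ∧ (∃ k, c k = b) ∧ FirstOrder.Language.Structure.RelMap R c)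
    (hfree₁ : ∀ i, ¬ ∃ h : T i → D, (∀ x, h x ∈ A) ∧
      ∀ (n : ℕ) (R : L.Relations n) (c : Fin n → T i),
        FirstOrder.Language.Structure.RelMap R c → (fun k => h (c k)) ∈ r₁ n R)
    (hfree₂ : ∀ i, ¬ ∃ h : T i → D, (∀ x, h x ∈ B) ∧
      ∀ (n : ℕ) (R : L.Relations n) (c : Fin n → T i),
        FirstOrder.Language.Structure.RelMap R c → (fun k => h (c k)) ∈ r₂ n R) :
    ∀ i, ¬ ∃ h : T i → D, ∀ (n : ℕ) (R : L.Relations n) (c : Fin n → T i),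
      FirstOrder.Language.Structure.RelMap R c → (fun k => h (c k)) ∈ r₁ n R ∪ r₂ n R :=
  stmt14_general A B r₁ r₂ h₁ h₂ hc₁ hc₂ T hclique hfree₁ hfree₂
end
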